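/- Let S be a simplicial poset of rank n with m vertices and let t₁,…,t_n be degree-two elements of Z[S], t_i = Σ_j λ_{ij} v_j. If for every σ ∈ S the restricted elements s_σ(t₁),…,s_σ(t_n) generate the positive-degree ideal of the polynomial ring Z[σ] = Z[v_i : i ∈ V(σ)], then Z[S] is a finitely generated module over Z[t₁,…,t_n]. -/

import Mathlib

open MvPolynomial

/-- A finite poset with a bottom element is a *simplicial poset* if every lower
interval `[⊥, σ]` is a Boolean lattice, i.e. order-isomorphic to the poset of
subsets of a finite set. -/
def IsSimplicialPoset (α : Type) [Fintype α] [PartialOrder α] [OrderBot α] : Prop :=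
  ∀ σ : α, ∃ k : ℕ, Nonempty (Set.Icc (⊥ : α) σ ≃o Finset (Fin k))

/-- The vertex set `V(σ)`: rank-one elements (atoms) below `σ`. -/
def vertexSet {α : Type} [PartialOrder α] [OrderBot α] (σ : α) : Set α :=
  {i : α | IsAtom i ∧ i ≤ σ}

/-- The rank `|σ|`, defined as the number of vertices of `σ`. -/
noncomputable def srank {α : Type} [PartialOrder α] [OrderBot α] (σ : α) : ℕ :=
  (vertexSet σ).ncard

/-- `σ ∨ τ`: the set of least (minimal) common upper bounds. -/
def joins {α : Type} [PartialOrder α] (σ τ : α) : Set α :=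
  {η : α | Minimal (fun x => σ ≤ x ∧ τ ≤ x) η}

/-- `σ ∧ τ`: the set of greatest (maximal) common lower bounds. -/
def meets {α : Type} [PartialOrder α] (σ τ : α) : Set α :=
  {ρ : α | Maximal (fun x => x ≤ σ ∧ x ≤ τ) ρ}

/-- The straightening ideal defining the face ring of a simplicial poset:
generated by `v_⊥ - 1`, the products `v_σ v_τ` with `σ ∨ τ = ∅`, and the
elements `v_σ v_τ - v_{σ∧τ} ∑_{η ∈ σ∨τ} v_η`. -/
noncomputable def straightening (R : Type) [CommRing R]
    (α : Type) [Fintype α] [PartialOrder α] [OrderBot α] : Ideal (MvPolynomial α R) :=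
  Ideal.span (({X ⊥ - 1} : Set (MvPolynomial α R)) ∪
    {p | ∃ σ τ : α, joins σ τ = ∅ ∧ p = X σ * X τ} ∪
    {p | ∃ σ τ ρ : α, ρ ∈ meets σ τ ∧ (joins σ τ).Nonempty ∧
      p = X σ * X τ - X ρ * ∑ η ∈ (Set.toFinite (joins σ τ)).toFinset, X η})

/-- The face ring `R[S]` of a simplicial poset. -/
noncomputable abbrev faceRing (R : Type) [CommRing R]
    (α : Type) [Fintype α] [PartialOrder α] [OrderBot α] :=
  MvPolynomial α R ⧸ straightening R α

/-!
Fix a vertex `j`. On a face `σ ∋ j`, the hypothesis says that `x_j` lies in the ideal generated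
by the linear forms `s_σ(t_i)`; comparing linear parts, it is a `ℤ`-linear combination of them,
so `s_σ(v_j) = s_σ(a_σ)` for some `a_σ ∈ ℤ[t]` (take `a_σ = 0` if `j ∉ σ`). The element
`∏_σ (v_j - a_σ)` then lies in the subring generated by the vertices and is killed by every
restriction. The restrictions are jointly injective on that subring: a vertex monomial whose
support lies in a face `σ` is seen by `s_σ`, and one whose support lies in no face is zero,
because `∏_{j ∈ W} v_j = ∑_{V(η) = W} v_η` in `ℤ[S]`. Hence `v_j` is integral over `ℤ[t]`.
The same product formula gives `v_τ² = (∏_{j ∈ V(τ)} v_j) v_τ`, so every generator `v_τ` of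
`ℤ[S]` is integral over `ℤ[t]`, and `ℤ[S]` is a finite `ℤ[t]`-module.
-/

namespace MvPolynomial

lemma killCompl_X {σ τ R : Type*} [CommSemiring R] {f : σ → τ} (hf : Function.Injective f)
    (i : σ) : killCompl hf (X (f i) : MvPolynomial τ R) = X i := by
  simpa using killCompl_rename_app hf (X i : MvPolynomial σ R)

lemma killCompl_X_of_notMem_range {σ τ R : Type*} [CommSemiring R] {f : σ → τ}
    (hf : Function.Injective f) {i : τ} (h : i ∉ Set.range f) :
    killCompl hf (X i : MvPolynomial τ R) = 0 := by
  rw [killCompl, aeval_X, dif_neg h]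

variable {σ R : Type*} [CommSemiring R]

lemma homogeneousComponent_mul_of_isHomogeneous {n : ℕ} (c : MvPolynomial σ R)
    {ℓ : MvPolynomial σ R} (hℓ : ℓ.IsHomogeneous n) :
    homogeneousComponent n (c * ℓ) = C (coeff 0 c) * ℓ := by
  conv_lhs => rw [← sum_homogeneousComponent c]
  rw [Finset.sum_mul, map_sum, Finset.sum_eq_single_of_mem 0 (by simp), homogeneousComponent_zero,
    homogeneousComponent_eq_self (by simpa using (isHomogeneous_C σ (coeff 0 c)).mul hℓ)]
  intro k _ hk
  rw [homogeneousComponent_of_mem ((homogeneousComponent_isHomogeneous k c).mul hℓ), if_neg]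
  omega

lemma mem_span_of_mem_ideal_span_of_isHomogeneous {ι : Type*} [Fintype ι] {n : ℕ}
    {ℓ : ι → MvPolynomial σ R} (hℓ : ∀ i, (ℓ i).IsHomogeneous n) {p : MvPolynomial σ R}
    (hp : p.IsHomogeneous n) (h : p ∈ Ideal.span (Set.range ℓ)) :
    p ∈ Submodule.span R (Set.range ℓ) := by
  obtain ⟨c, rfl⟩ := Ideal.mem_span_range_iff_exists_fun.mp h
  rw [← homogeneousComponent_eq_self hp, map_sum]
  refine Submodule.sum_mem _ fun i _ => ?_
  rw [homogeneousComponent_mul_of_isHomogeneous _ (hℓ i), ← smul_eq_C_mul]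
  exact Submodule.smul_mem _ _ (Submodule.subset_span ⟨i, rfl⟩)

end MvPolynomial

section Integrality

variable {R S : Type*} [CommRing R] [CommRing S] [Algebra R S]

lemma isIntegral_of_prod_sub_eq_zero {ι : Type*} (s : Finset ι) (a : ι → R) {x : S}
    (h : ∏ i ∈ s, (x - algebraMap R S (a i)) = 0) : IsIntegral R x :=
  ⟨∏ i ∈ s, (Polynomial.X - Polynomial.C (a i)),
    Polynomial.monic_prod_of_monic _ _ fun i _ => Polynomial.monic_X_sub_C (a i),
    by simpa [Polynomial.eval₂_finsetProd] using h⟩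

lemma isIntegral_of_sq_eq_mul {x c : S} (hc : IsIntegral R c) (h : x ^ 2 = c * x) :
    IsIntegral R x :=
  isIntegral_trans (R := R) (A := integralClosure R S) x
    ⟨(Polynomial.X - Polynomial.C ⟨c, hc⟩) * Polynomial.X,
      (Polynomial.monic_X_sub_C _).mul Polynomial.monic_X, by simp [sub_mul, ← sq, h]⟩

lemma Module.Finite.of_adjoin_eq_top_of_isIntegral (A : Subalgebra R S) {s : Set S}
    (hs : s.Finite) (htop : Algebra.adjoin R s = ⊤) (hint : ∀ x ∈ s, IsIntegral A x) :
    Module.Finite A S := by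
  have htopA : Algebra.adjoin A s = ⊤ := by
    apply Subalgebra.restrictScalars_injective R
    rw [Algebra.restrictScalars_adjoin, Subalgebra.restrictScalars_top, eq_top_iff, ← htop]
    exact Algebra.adjoin_mono Set.subset_union_right
  rw [Module.finite_def, ← Algebra.top_toSubmodule, ← htopA]
  exact fg_adjoin_of_finite hs hint

end Integrality

section SimplicialPoset

variable {α : Type} [PartialOrder α]

lemma exists_mem_joins_le [Finite α] {a b σ : α} (ha : a ≤ σ) (hb : b ≤ σ) :
    ∃ η ∈ joins a b, η ≤ σ :=
  let ⟨η, hησ, hη⟩ := exists_minimal_le_of_wellFoundedLT (fun x => a ≤ x ∧ b ≤ x) σ ⟨ha, hb⟩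
  ⟨η, hη, hησ⟩

variable [OrderBot α]

lemma bot_mem_meets_of_isAtom {η j : α} (hj : IsAtom j) (hjη : ¬ j ≤ η) : ⊥ ∈ meets η j :=
  ⟨⟨bot_le, bot_le⟩, fun _ hy _ => ((hj.le_iff.mp hy.2).resolve_right fun h => hjη (h ▸ hy.1)).le⟩

lemma IsSimplicialPoset.exists_orderIso_Iic [Fintype α] (hS : IsSimplicialPoset α) (σ : α) :
    ∃ k, Nonempty (Set.Iic σ ≃o Finset (Fin k)) :=
  let ⟨k, ⟨e⟩⟩ := hS σ
  ⟨k, ⟨(OrderIso.setCongr _ _ Set.Icc_bot).symm.trans e⟩⟩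

variable [Fintype α] [DecidablePred (IsAtom (α := α))] [DecidableRel ((· ≤ ·) : α → α → Prop)]

def vertices (x : α) : Finset α := {j | IsAtom j ∧ j ≤ x}

@[simp]
lemma mem_vertices {x j : α} : j ∈ vertices x ↔ IsAtom j ∧ j ≤ x := by
  simp [vertices]

lemma vertices_mono {x y : α} (h : x ≤ y) : vertices x ⊆ vertices y := fun _ hj => by
  rw [mem_vertices] at hj ⊢
  exact ⟨hj.1, hj.2.trans h⟩

lemma vertices_bot : vertices (⊥ : α) = ∅ :=
  Finset.eq_empty_of_forall_notMem fun _ hj =>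
    (mem_vertices.mp hj).1.1 (le_bot_iff.mp (mem_vertices.mp hj).2)

lemma vertices_of_isAtom {j : α} (hj : IsAtom j) : vertices j = {j} := by
  ext i
  simp only [mem_vertices, Finset.mem_singleton]
  exact ⟨fun ⟨hi, hij⟩ => (hj.le_iff.mp hij).resolve_left hi.1, by rintro rfl; exact ⟨hj, le_rfl⟩⟩

lemma vertices_eq_image_of_orderIso [DecidableEq α] {σ : α} {ι : Type*}
    (e : Set.Iic σ ≃o Finset ι) (x : Set.Iic σ) :
    vertices (x : α) = (e x).image fun i => (e.symm {i} : α) := by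
  ext j
  simp only [mem_vertices, Finset.mem_image]
  constructor
  · rintro ⟨hj, hjx⟩
    obtain ⟨i, hi⟩ := Finset.isAtom_iff.mp ((e.isAtom_iff _).mpr (hj.Iic (hjx.trans x.2)))
    refine ⟨i, Finset.singleton_subset_iff.mp (hi ▸ e.monotone (Subtype.mk_le_mk.mpr hjx)), ?_⟩
    rw [← hi, e.symm_apply_apply]
  · rintro ⟨i, hi, rfl⟩
    exact ⟨((e.symm.isAtom_iff _).mpr (Finset.isAtom_singleton i)).of_isAtom_coe_Iic,
      e.symm_apply_le.mpr (Finset.singleton_subset_iff.mpr hi)⟩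

namespace IsSimplicialPoset

variable (hS : IsSimplicialPoset α)
include hS

lemma le_of_vertices_subset {x y σ : α} (hx : x ≤ σ) (hy : y ≤ σ)
    (h : vertices x ⊆ vertices y) : x ≤ y := by
  classical
  obtain ⟨k, ⟨e⟩⟩ := hS.exists_orderIso_Iic σ
  rw [vertices_eq_image_of_orderIso e ⟨x, hx⟩, vertices_eq_image_of_orderIso e ⟨y, hy⟩,
    Finset.image_subset_image_iff] at h
  · exact e.le_iff_le.mp h
  · exact Subtype.val_injective.comp (e.symm.injective.comp Finset.singleton_injective)

lemma eq_of_vertices_eq {x y σ : α} (hx : x ≤ σ) (hy : y ≤ σ)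
    (h : vertices x = vertices y) : x = y :=
  le_antisymm (hS.le_of_vertices_subset hx hy h.le) (hS.le_of_vertices_subset hy hx h.ge)

lemma exists_le_vertices_eq {x : α} {W : Finset α} (hW : W ⊆ vertices x) :
    ∃ y ≤ x, vertices y = W := by
  classical
  obtain ⟨k, ⟨e⟩⟩ := hS.exists_orderIso_Iic x
  rw [vertices_eq_image_of_orderIso e ⟨x, le_rfl⟩] at hW
  obtain ⟨s, -, rfl⟩ := Finset.subset_image_iff.mp hW
  exact ⟨e.symm s, (e.symm s).2, by rw [vertices_eq_image_of_orderIso e, e.apply_symm_apply]⟩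

lemma eq_bot_of_vertices_eq_empty {x : α} (h : vertices x = ∅) : x = ⊥ :=
  le_bot_iff.mp (hS.le_of_vertices_subset le_rfl bot_le (by simp [h]))

lemma joins_eq_empty_of_vertices_eq {η τ : α} (hne : η ≠ τ) (h : vertices η = vertices τ) :
    joins η τ = ∅ :=
  Set.eq_empty_of_forall_notMem fun _ hξ => hne (hS.eq_of_vertices_eq hξ.1.1 hξ.1.2 h)

variable [DecidableEq α]

lemma vertices_of_mem_joins {a b η : α} (h : η ∈ joins a b) :
    vertices η = vertices a ∪ vertices b := by
  obtain ⟨u, huη, huV⟩ :=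
    hS.exists_le_vertices_eq (Finset.union_subset (vertices_mono h.1.1) (vertices_mono h.1.2))
  have hau : a ≤ u := hS.le_of_vertices_subset h.1.1 huη (huV ▸ Finset.subset_union_left)
  have hbu : b ≤ u := hS.le_of_vertices_subset h.1.2 huη (huV ▸ Finset.subset_union_right)
  rw [← huV, le_antisymm huη (h.2 ⟨hau, hbu⟩ huη)]

lemma eq_of_mem_joins_of_le {a b η η' σ : α} (h : η ∈ joins a b) (h' : η' ∈ joins a b)
    (hσ : η ≤ σ) (hσ' : η' ≤ σ) : η = η' :=
  hS.eq_of_vertices_eq hσ hσ' (by rw [hS.vertices_of_mem_joins h, hS.vertices_of_mem_joins h'])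

lemma vertices_of_mem_meets {a b ρ σ : α} (ha : a ≤ σ) (hb : b ≤ σ) (h : ρ ∈ meets a b) :
    vertices ρ = vertices a ∩ vertices b := by
  obtain ⟨w, hwa, hwV⟩ := hS.exists_le_vertices_eq
    (Finset.inter_subset_left (s₁ := vertices a) (s₂ := vertices b))
  have hwb : w ≤ b := hS.le_of_vertices_subset (hwa.trans ha) hb (hwV ▸ Finset.inter_subset_right)
  have hρw : ρ ≤ w := hS.le_of_vertices_subset (h.1.1.trans ha) (hwa.trans ha)
    (hwV ▸ Finset.subset_inter (vertices_mono h.1.1) (vertices_mono h.1.2))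
  rw [← hwV, le_antisymm hρw (h.2 ⟨hwa, hwb⟩ hρw)]

lemma filter_vertices_eq_insert {W : Finset α} {j : α} (hj : IsAtom j) :
    ({ξ | vertices ξ = insert j W} : Finset α) =
      ({η | vertices η = W} : Finset α).biUnion fun η => (Set.toFinite (joins η j)).toFinset := by
  ext ξ
  simp only [Finset.mem_filter, Finset.mem_univ, true_and, Finset.mem_biUnion,
    Set.Finite.mem_toFinset]
  constructor
  · intro hξ
    obtain ⟨η, hηξ, hηV⟩ := hS.exists_le_vertices_eq (hξ ▸ Finset.subset_insert j W)
    have hjξ : j ≤ ξ := (mem_vertices.mp (hξ ▸ Finset.mem_insert_self j W)).2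
    refine ⟨η, hηV, ⟨hηξ, hjξ⟩, fun y hy hyξ => hS.le_of_vertices_subset le_rfl hyξ ?_⟩
    rw [hξ, ← hηV]
    exact Finset.insert_subset (mem_vertices.mpr ⟨hj, hy.2⟩) (vertices_mono hy.1)
  · rintro ⟨η, hηV, hξ⟩
    rw [hS.vertices_of_mem_joins hξ, hηV, vertices_of_isAtom hj, Finset.union_comm,
      Finset.insert_eq]

end IsSimplicialPoset

end SimplicialPoset

namespace FaceRing

variable {R : Type} [CommRing R] {α : Type} [Fintype α] [PartialOrder α] [OrderBot α]

local notation "mk" => Ideal.Quotient.mk (straightening R α)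

lemma mk_X_bot : mk (X ⊥) = 1 := by
  rw [← map_one mk]
  exact Ideal.Quotient.mk_eq_mk_iff_sub_mem _ _ |>.mpr (Ideal.subset_span (Or.inl (Or.inl rfl)))

lemma mk_X_mul_X_of_joins_eq_empty {a b : α} (h : joins a b = ∅) : mk (X a * X b) = 0 :=
  Ideal.Quotient.eq_zero_iff_mem.mpr (Ideal.subset_span (Or.inl (Or.inr ⟨a, b, h, rfl⟩)))

lemma mk_X_mul_X_of_mem_meets {a b ρ : α} (hρ : ρ ∈ meets a b) (h : (joins a b).Nonempty) :
    mk (X a * X b) = mk (X ρ * ∑ η ∈ (Set.toFinite (joins a b)).toFinset, X η) :=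
  Ideal.Quotient.mk_eq_mk_iff_sub_mem _ _ |>.mpr
    (Ideal.subset_span (Or.inr ⟨a, b, ρ, hρ, h, rfl⟩))

lemma mk_X_mul_X_of_isAtom {η j : α} (hj : IsAtom j) (hjη : ¬ j ≤ η) :
    mk (X η * X j) = ∑ ξ ∈ (Set.toFinite (joins η j)).toFinset, mk (X ξ) := by
  rcases (joins η j).eq_empty_or_nonempty with h | h
  · simp [mk_X_mul_X_of_joins_eq_empty h, h]
  · rw [mk_X_mul_X_of_mem_meets (bot_mem_meets_of_isAtom hj hjη) h, map_mul, mk_X_bot, one_mul,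
      map_sum]

variable (R α) in
noncomputable def vertexSubalgebra : Subalgebra R (faceRing R α) :=
  (supported R {j : α | IsAtom j}).map (Ideal.Quotient.mkₐ R (straightening R α))

lemma mk_mem_vertexSubalgebra {q : MvPolynomial α R} (hq : q ∈ supported R {j : α | IsAtom j}) :
    mk q ∈ vertexSubalgebra R α :=
  ⟨q, hq, rfl⟩

variable [DecidablePred (IsAtom (α := α))]

lemma sum_C_mul_X_mem_supported (c : α → R) :
    ∑ j ∈ Finset.univ.filter (fun j : α => IsAtom j), C (c j) * X j ∈
      supported R {j : α | IsAtom j} :=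
  Subalgebra.sum_mem _ fun j hj => by
    rw [← smul_eq_C_mul]
    exact Subalgebra.smul_mem _
      (Algebra.subset_adjoin (Set.mem_image_of_mem X (by simpa using hj))) _

variable [DecidableRel ((· ≤ ·) : α → α → Prop)]

section Relations

variable [DecidableEq α] (hS : IsSimplicialPoset α)
include hS

lemma mk_prod_X_eq_sum (W : Finset α) (hW : ∀ j ∈ W, IsAtom j) :
    mk (∏ j ∈ W, X j) = ∑ η ∈ ({η | vertices η = W} : Finset α), mk (X η) := by
  induction W using Finset.induction_on with
  | empty =>
    have hbot : ({η | vertices η = ∅} : Finset α) = {⊥} := by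
      ext η
      simp only [Finset.mem_filter, Finset.mem_univ, true_and, Finset.mem_singleton]
      exact ⟨hS.eq_bot_of_vertices_eq_empty, fun h => h ▸ vertices_bot⟩
    rw [hbot, Finset.prod_empty, map_one, Finset.sum_singleton, mk_X_bot]
  | @insert j W hjW ih =>
    have hj : IsAtom j := hW j (Finset.mem_insert_self j W)
    rw [Finset.prod_insert hjW, map_mul, ih fun i hi => hW i (Finset.mem_insert_of_mem hi),
      Finset.mul_sum, hS.filter_vertices_eq_insert hj, Finset.sum_biUnion]
    · refine Finset.sum_congr rfl fun η hη => ?_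
      have hjη : ¬ j ≤ η := fun hle =>
        hjW ((Finset.mem_filter.mp hη).2 ▸ mem_vertices.mpr ⟨hj, hle⟩)
      rw [← map_mul, mul_comm, mk_X_mul_X_of_isAtom hj hjη]
    · intro η hη η' hη' hne
      rw [Finset.coe_filter, Set.mem_ofPred_eq] at hη hη'
      refine Finset.disjoint_left.mpr fun ξ hξ hξ' => hne ?_
      rw [Set.Finite.mem_toFinset] at hξ hξ'
      exact hS.eq_of_vertices_eq hξ.1.1 hξ'.1.1 (hη.2.trans hη'.2.symm)

lemma mk_X_sq (τ : α) : mk (X τ) ^ 2 = mk (∏ j ∈ vertices τ, X j) * mk (X τ) := by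
  rw [mk_prod_X_eq_sum hS _ fun j hj => (mem_vertices.mp hj).1, Finset.sum_mul,
    Finset.sum_eq_single_of_mem τ (by simp), sq]
  intro η hη hne
  rw [← map_mul, mk_X_mul_X_of_joins_eq_empty
    (hS.joins_eq_empty_of_vertices_eq hne (Finset.mem_filter.mp hη).2)]

lemma mk_monomial_eq_zero_of_not_bddAbove {m : α →₀ ℕ} (hm : ∀ j ∈ m.support, IsAtom j)
    (h : ¬ BddAbove (m.support : Set α)) (c : R) : mk (monomial m c) = 0 := by
  obtain ⟨r, hr⟩ : ∏ j ∈ m.support, X j ∣ monomial m c := by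
    rw [monomial_eq, Finsupp.prod]
    exact (Finset.prod_dvd_prod_of_dvd _ _ fun j hj =>
      dvd_pow_self (X j) (Finsupp.mem_support_iff.mp hj)).mul_left _
  rw [hr, map_mul, mk_prod_X_eq_sum hS _ hm, Finset.sum_eq_zero, zero_mul]
  intro η hη
  exact absurd ⟨η, fun j hj => (mem_vertices.mp ((Finset.mem_filter.mp hη).2 ▸ hj)).2⟩ h

end Relations

section Restriction

variable (R) in
/-- `s_σ` before the variables outside `V(σ)` are discarded. -/
noncomputable def restrictMv (σ : α) : MvPolynomial α R →ₐ[R] MvPolynomial α R :=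
  aeval fun τ => if τ ≤ σ then ∏ j ∈ vertices τ, X j else 0

lemma restrictMv_X (σ τ : α) :
    restrictMv R σ (X τ) = if τ ≤ σ then ∏ j ∈ vertices τ, X j else 0 :=
  aeval_X _ τ

lemma restrictMv_X_of_not_le {σ τ : α} (h : ¬ τ ≤ σ) : restrictMv R σ (X τ) = 0 := by
  rw [restrictMv_X, if_neg h]

lemma restrictMv_X_mul_X_of_not_le {σ a b : α} (h : ¬ (a ≤ σ ∧ b ≤ σ)) :
    restrictMv R σ (X a * X b) = 0 := by
  rw [not_and_or] at h
  rcases h with h | h <;> simp [restrictMv_X_of_not_le h]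

lemma killCompl_restrictMv_of_mem_supported {σ : α} {q : MvPolynomial α R}
    (hq : q ∈ supported R {j : α | IsAtom j}) :
    killCompl Subtype.val_injective (restrictMv R σ q) =
      killCompl (Subtype.val_injective (p := fun j : α => IsAtom j ∧ j ≤ σ)) q := by
  have hX : Set.EqOn ((killCompl Subtype.val_injective).comp (restrictMv R σ))
      (killCompl (Subtype.val_injective (p := fun j : α => IsAtom j ∧ j ≤ σ)))
      (X '' {j : α | IsAtom j}) := by
    rintro _ ⟨j, hj, rfl⟩
    by_cases hjσ : j ≤ σ
    · rw [AlgHom.comp_apply, restrictMv_X, if_pos hjσ, vertices_of_isAtom hj,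
        Finset.prod_singleton]
    · rw [AlgHom.comp_apply, restrictMv_X_of_not_le hjσ, map_zero,
        killCompl_X_of_notMem_range]
      rintro ⟨i, rfl⟩
      exact hjσ i.2.2
  exact AlgHom.eqOn_adjoin_iff.mpr hX hq

variable [DecidableEq α] (hS : IsSimplicialPoset α)
include hS

lemma restrictMv_mul_eq_of_mem_meets {σ a b ρ : α} (hρ : ρ ∈ meets a b) :
    restrictMv R σ (X a * X b) =
      restrictMv R σ (X ρ * ∑ η ∈ (Set.toFinite (joins a b)).toFinset, X η) := by
  by_cases hab : a ≤ σ ∧ b ≤ σ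
  · obtain ⟨η, hη, hησ⟩ := exists_mem_joins_le hab.1 hab.2
    have hsum : ∑ ξ ∈ (Set.toFinite (joins a b)).toFinset, restrictMv R σ (X ξ) =
        restrictMv R σ (X η) := by
      refine Finset.sum_eq_single_of_mem η (by simpa using hη) fun ξ hξ hne => ?_
      refine restrictMv_X_of_not_le fun hξσ => hne ?_
      exact hS.eq_of_mem_joins_of_le (by simpa using hξ) hη hξσ hησ
    rw [map_mul, map_mul, map_sum, hsum, restrictMv_X, restrictMv_X, restrictMv_X, restrictMv_X,
      if_pos hab.1, if_pos hab.2, if_pos (hρ.1.1.trans hab.1), if_pos hησ,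
      hS.vertices_of_mem_meets hab.1 hab.2 hρ, hS.vertices_of_mem_joins hη,
      Finset.prod_union_inter.symm, mul_comm]
  · rw [restrictMv_X_mul_X_of_not_le hab, map_mul, map_sum, Finset.sum_eq_zero, mul_zero]
    intro η hη
    have hη : η ∈ joins a b := by simpa using hη
    exact restrictMv_X_of_not_le fun hησ => hab ⟨hη.1.1.trans hησ, hη.1.2.trans hησ⟩

lemma straightening_le_ker_restrictMv (σ : α) :
    straightening R α ≤ RingHom.ker (restrictMv R σ) := by
  rw [straightening, Ideal.span_le]
  rintro _ ((rfl | ⟨a, b, hab, rfl⟩) | ⟨a, b, ρ, hρ, -, rfl⟩) <;>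
    rw [SetLike.mem_coe, RingHom.mem_ker]
  · rw [map_sub, restrictMv_X, if_pos bot_le, vertices_bot, Finset.prod_empty, map_one, sub_self]
  · refine restrictMv_X_mul_X_of_not_le fun h => ?_
    obtain ⟨η, hη, -⟩ := exists_mem_joins_le h.1 h.2
    exact (hab ▸ hη : η ∈ (∅ : Set α))
  · rw [map_sub, restrictMv_mul_eq_of_mem_meets hS hρ, sub_self]

variable (R) in
/-- The restriction `s_σ : R[S] → R[σ]`. -/
noncomputable def restrict (σ : α) :
    faceRing R α →ₐ[R] MvPolynomial {j : α // IsAtom j ∧ j ≤ σ} R :=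
  (killCompl Subtype.val_injective).comp <|
    Ideal.Quotient.liftₐ _ (restrictMv R σ) fun _ h => straightening_le_ker_restrictMv hS σ h

lemma restrict_mk (σ : α) (q : MvPolynomial α R) :
    restrict R hS σ (mk q) = killCompl Subtype.val_injective (restrictMv R σ q) :=
  rfl

lemma restrict_mk_X_of_le {σ j : α} (hj : IsAtom j) (h : j ≤ σ) :
    restrict R hS σ (mk (X j)) = X ⟨j, hj, h⟩ := by
  rw [restrict_mk, restrictMv_X, if_pos h, vertices_of_isAtom hj, Finset.prod_singleton]
  exact killCompl_X Subtype.val_injective (⟨j, hj, h⟩ : {j : α // IsAtom j ∧ j ≤ σ})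

lemma restrict_mk_X_of_not_le {σ j : α} (h : ¬ j ≤ σ) : restrict R hS σ (mk (X j)) = 0 := by
  rw [restrict_mk, restrictMv_X_of_not_le h, map_zero]

lemma restrict_mk_sum_C_mul_X (σ : α) (c : α → R) :
    restrict R hS σ (mk (∑ j ∈ Finset.univ.filter (fun j : α => IsAtom j), C (c j) * X j)) =
      ∑ j : {j : α // IsAtom j ∧ j ≤ σ}, C (c j) * X j := by
  rw [restrict_mk, killCompl_restrictMv_of_mem_supported (sum_C_mul_X_mem_supported c), map_sum,
    ← Finset.sum_filter_add_sum_filter_not _ (· ≤ σ), Finset.filter_filter,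
    Finset.sum_subtype (F := inferInstance) _ (p := fun j : α => IsAtom j ∧ j ≤ σ) (by simp),
    Finset.sum_eq_zero (s := Finset.filter _ _), add_zero]
  · simp only [map_mul, killCompl_C, killCompl_X]
  · intro j hj
    rw [map_mul, killCompl_X_of_notMem_range, mul_zero]
    rintro ⟨i, rfl⟩
    exact (Finset.mem_filter.mp hj).2 i.2.2

end Restriction

variable [DecidableEq α] (hS : IsSimplicialPoset α)
include hS

lemma eq_zero_of_forall_restrict_eq_zero {x : faceRing R α} (hx : x ∈ vertexSubalgebra R α)
    (h : ∀ σ, restrict R hS σ x = 0) : x = 0 := by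
  obtain ⟨q, hq, rfl⟩ := hx
  have hkill (σ : α) :
      killCompl (Subtype.val_injective (p := fun j : α => IsAtom j ∧ j ≤ σ)) q = 0 := by
    rw [← killCompl_restrictMv_of_mem_supported hq, ← restrict_mk hS]
    exact h σ
  change mk q = 0
  rw [q.as_sum, map_sum]
  refine Finset.sum_eq_zero fun m hm => ?_
  have hmA : ∀ j ∈ m.support, IsAtom j := fun j hj =>
    mem_supported.mp hq ((mem_vars_iff_mem_support j).mpr ⟨m, hm, hj⟩)
  by_cases hface : BddAbove (m.support : Set α)
  · obtain ⟨σ, hσ⟩ := hface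
    have hrange : ↑m.support ⊆ Set.range (Subtype.val : {j : α // IsAtom j ∧ j ≤ σ} → α) :=
      fun j hj => ⟨⟨j, hmA j hj, hσ hj⟩, rfl⟩
    rw [← m.mapDomain_comapDomain _ Subtype.val_injective hrange,
      ← coeff_killCompl Subtype.val_injective, hkill σ, coeff_zero, monomial_zero, map_zero]
  · exact mk_monomial_eq_zero_of_not_bddAbove hS hmA hface _

/-- `∏_σ (x - a_σ)` is killed by every restriction, hence vanishes. -/
lemma isIntegral_of_forall_restrict_eq {A : Subalgebra R (faceRing R α)}
    (hA : A ≤ vertexSubalgebra R α) {x : faceRing R α} (hx : x ∈ vertexSubalgebra R α)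
    (h : ∀ σ, ∃ a ∈ A, restrict R hS σ a = restrict R hS σ x) : IsIntegral A x := by
  choose a haA ha using h
  refine isIntegral_of_prod_sub_eq_zero Finset.univ (fun σ => (⟨a σ, haA σ⟩ : A)) ?_
  refine eq_zero_of_forall_restrict_eq_zero hS
    (Subalgebra.prod_mem _ fun σ _ => Subalgebra.sub_mem _ hx (hA (haA σ))) fun σ => ?_
  rw [map_prod]
  exact Finset.prod_eq_zero (Finset.mem_univ σ) (by rw [map_sub, ← ha σ]; exact sub_self _)

lemma module_finite_of_isIntegral_vertices (A : Subalgebra R (faceRing R α))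
    (h : ∀ j, IsAtom j → IsIntegral A (mk (X j))) : Module.Finite A (faceRing R α) := by
  refine .of_adjoin_eq_top_of_isIntegral A (Set.finite_range fun τ : α => mk (X τ)) ?_ ?_
  · have hrange : Set.range (fun τ : α => mk (X τ)) =
        Ideal.Quotient.mkₐ R (straightening R α) '' Set.range X := by
      rw [← Set.range_comp]
      rfl
    rw [hrange, Algebra.adjoin_image, adjoin_range_X, Algebra.map_top, AlgHom.range_eq_top]
    exact Ideal.Quotient.mkₐ_surjective R _
  · rintro _ ⟨τ, rfl⟩
    refine isIntegral_of_sq_eq_mul ?_ (mk_X_sq hS τ)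
    rw [map_prod]
    exact IsIntegral.prod _ fun j hj => h j (mem_vertices.mp hj).1

end FaceRing

open FaceRing

theorem faceRing_module_finite_of_restrictions_generate_general {α : Type}
    [Fintype α] [PartialOrder α] [OrderBot α]
    [DecidablePred (IsAtom (α := α))] [DecidableRel ((· ≤ ·) : α → α → Prop)]
    (hS : IsSimplicialPoset α) (n : ℕ)
    (lam : Fin n → α → ℤ)
    (t : Fin n → faceRing ℤ α)
    (ht : ∀ i : Fin n, t i = Ideal.Quotient.mk (straightening ℤ α)
      (∑ j ∈ Finset.univ.filter (fun j : α => IsAtom j), C (lam i j) * X j))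
    (hgen : ∀ σ : α,
      Ideal.span (Set.range fun i : Fin n =>
          (∑ j : {j : α // IsAtom j ∧ j ≤ σ}, C (lam i j.1) * X j :
            MvPolynomial {j : α // IsAtom j ∧ j ≤ σ} ℤ)) =
        Ideal.span (Set.range (X : {j : α // IsAtom j ∧ j ≤ σ} →
          MvPolynomial {j : α // IsAtom j ∧ j ≤ σ} ℤ))) :
    Module.Finite (Algebra.adjoin ℤ (Set.range t)) (faceRing ℤ α) := by
  classical
  set A := Algebra.adjoin ℤ (Set.range t)
  have hA : A ≤ vertexSubalgebra ℤ α := Algebra.adjoin_le <| Set.range_subset_iff.mpr fun i =>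
    ht i ▸ mk_mem_vertexSubalgebra (sum_C_mul_X_mem_supported (lam i))
  refine module_finite_of_isIntegral_vertices hS A fun j hj =>
    isIntegral_of_forall_restrict_eq hS hA
      (mk_mem_vertexSubalgebra (Algebra.subset_adjoin (Set.mem_image_of_mem X hj))) fun σ => ?_
  by_cases hjσ : j ≤ σ
  · have hX : X ⟨j, hj, hjσ⟩ ∈ Submodule.span ℤ (Set.range fun i => restrict ℤ hS σ (t i)) := by
      simp_rw [ht, restrict_mk_sum_C_mul_X]
      refine mem_span_of_mem_ideal_span_of_isHomogeneous
        (fun i => IsHomogeneous.sum _ _ _ fun j _ => isHomogeneous_C_mul_X _ _)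
        (isHomogeneous_X _ _) ?_
      exact hgen σ ▸ Ideal.subset_span ⟨_, rfl⟩
    rw [Set.range_comp' (restrict ℤ hS σ) t, ← AlgHom.coe_toLinearMap, Submodule.span_image] at hX
    obtain ⟨a, ha, hax⟩ := hX
    exact ⟨a, Algebra.span_le_adjoin ℤ _ ha, hax.trans (restrict_mk_X_of_le hS hj hjσ).symm⟩
  · exact ⟨0, zero_mem A, by rw [map_zero, restrict_mk_X_of_not_le hS hjσ]⟩

/-- if the degree-two elements `t_i = ∑_j λ_{ij} v_j` of `ℤ[S]`
restrict, for every `σ ∈ S`, to generators of the positive-degree ideal of the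
polynomial ring `ℤ[σ] = ℤ[v_i : i ∈ V(σ)]`, then `ℤ[S]` is a finitely generated
module over `ℤ[t₁,…,t_n]`. -/
theorem faceRing_module_finite_of_restrictions_generate {α : Type}
    [Fintype α] [PartialOrder α] [OrderBot α] [DecidableEq α]
    [DecidablePred (IsAtom (α := α))] [DecidableRel ((· ≤ ·) : α → α → Prop)]
    (hS : IsSimplicialPoset α) (n : ℕ)
    (hn : Finset.univ.sup (srank : α → ℕ) = n)
    (lam : Fin n → α → ℤ)
    (t : Fin n → faceRing ℤ α)
    (ht : ∀ i : Fin n, t i = Ideal.Quotient.mk (straightening ℤ α)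
      (∑ j ∈ Finset.univ.filter (fun j : α => IsAtom j), C (lam i j) * X j))
    (hgen : ∀ σ : α,
      Ideal.span (Set.range fun i : Fin n =>
          (∑ j : {j : α // IsAtom j ∧ j ≤ σ}, C (lam i j.1) * X j :
            MvPolynomial {j : α // IsAtom j ∧ j ≤ σ} ℤ)) =
        Ideal.span (Set.range (X : {j : α // IsAtom j ∧ j ≤ σ} →
          MvPolynomial {j : α // IsAtom j ∧ j ≤ σ} ℤ))) :
    Module.Finite (Algebra.adjoin ℤ (Set.range t)) (faceRing ℤ α) :=
  faceRing_module_finite_of_restrictions_generate_general hS n lam t ht hgen
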